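/- Suppose ∂M/∂t = iR M + ω T for a real-valued function R(s,t), where ω = ⟨∂M/∂t, T⟩. Then the Hasimoto wave function satisfies the evolution equation ∂ψ/∂t − iRψ + ∂ω/∂s + (∂ν/∂s − μk)ψ = 0. -/

import Mathlib

open scoped BigOperators RealInnerProductSpace
open Complex

noncomputable section

abbrev E3 : Type := EuclideanSpace ℝ (Fin 3)

/-- Partial derivative with respect to the first (arclength) variable. -/
noncomputable def dS {V : Type} [NormedAddCommGroup V] [NormedSpace ℝ V]
    (F : ℝ → ℝ → V) : ℝ → ℝ → V := fun s t => deriv (fun x => F x t) s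

/-- Partial derivative with respect to the second (time) variable. -/
noncomputable def dT {V : Type} [NormedAddCommGroup V] [NormedSpace ℝ V]
    (F : ℝ → ℝ → V) : ℝ → ℝ → V := fun s t => deriv (fun x => F s x) t

/-- Complexification of a real vector in `ℝ³`. -/
noncomputable def cvec (v : E3) : Fin 3 → ℂ := fun i => (v i : ℂ)

/-- Bilinear extension of the real inner product to `ℂ³`. -/
noncomputable def cip (u v : Fin 3 → ℂ) : ℂ := ∑ i, u i * v i

/-- The phase `θ(s,t) = ∫₀^s τ(s',t) ds'`. -/
noncomputable def θf (τ : ℝ → ℝ → ℝ) : ℝ → ℝ → ℝ :=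
  fun s t => ∫ x in (0:ℝ)..s, τ x t

/-- The Hasimoto wave function `ψ = k e^{iθ}`. -/
noncomputable def ψf (k τ : ℝ → ℝ → ℝ) : ℝ → ℝ → ℂ :=
  fun s t => (k s t : ℂ) * Complex.exp (Complex.I * (θf τ s t : ℂ))

/-- The complexified frame vector `M = (N + iB) e^{iθ}`. -/
noncomputable def Mf (N B : ℝ → ℝ → E3) (τ : ℝ → ℝ → ℝ) : ℝ → ℝ → (Fin 3 → ℂ) :=
  fun s t => Complex.exp (Complex.I * (θf τ s t : ℂ)) •
    (cvec (N s t) + Complex.I • cvec (B s t))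

/-- `ω = ⟨∂M/∂t, T⟩` (bilinear inner product). -/
noncomputable def ωf (T N B : ℝ → ℝ → E3) (τ : ℝ → ℝ → ℝ) : ℝ → ℝ → ℂ :=
  fun s t => cip (dT (Mf N B τ) s t) (cvec (T s t))

section helpers

variable {V : Type} [NormedAddCommGroup V] [NormedSpace ℝ V]

lemma contDiff_slice_s {F : ℝ → ℝ → V} (h : ContDiff ℝ (⊤ : ℕ∞) (Function.uncurry F)) (t : ℝ) :
    ContDiff ℝ (⊤ : ℕ∞) (fun s => F s t) :=
  h.comp (contDiff_id.prodMk contDiff_const)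

lemma contDiff_slice_t {F : ℝ → ℝ → V} (h : ContDiff ℝ (⊤ : ℕ∞) (Function.uncurry F)) (s : ℝ) :
    ContDiff ℝ (⊤ : ℕ∞) (fun t => F s t) :=
  h.comp (contDiff_const.prodMk contDiff_id)

lemma hasDerivAt_dS {F : ℝ → ℝ → V} (h : ContDiff ℝ (⊤ : ℕ∞) (Function.uncurry F)) (s t : ℝ) :
    HasDerivAt (fun x => F x t) (dS F s t) s :=
  (((contDiff_slice_s h t).differentiable (by simp)) s).hasDerivAt

lemma hasDerivAt_dT {F : ℝ → ℝ → V} (h : ContDiff ℝ (⊤ : ℕ∞) (Function.uncurry F)) (s t : ℝ) :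
    HasDerivAt (fun x => F s x) (dT F s t) t :=
  (((contDiff_slice_t h s).differentiable (by simp)) t).hasDerivAt

lemma contDiff_dT {F : ℝ → ℝ → V} (h : ContDiff ℝ (⊤ : ℕ∞) (Function.uncurry F)) :
    ContDiff ℝ (⊤ : ℕ∞) (Function.uncurry (dT F)) := by
  have key : ∀ s t : ℝ, dT F s t = fderiv ℝ (Function.uncurry F) (s, t) (0, 1) := by
    intro s t
    have h1 : HasDerivAt (fun x : ℝ => (s, x)) ((0 : ℝ), (1 : ℝ)) t :=
      (hasDerivAt_const t s).prodMk (hasDerivAt_id t)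
    have h2 : HasFDerivAt (Function.uncurry F) (fderiv ℝ (Function.uncurry F) (s, t)) (s, t) :=
      (h.differentiable (by simp) (s, t)).hasFDerivAt
    have := h2.comp_hasDerivAt t h1
    exact this.deriv
  have h2 : ContDiff ℝ (⊤ : ℕ∞) (fun p : ℝ × ℝ => fderiv ℝ (Function.uncurry F) p ((0 : ℝ), (1 : ℝ))) :=
    (h.fderiv_right (by simp)).clm_apply contDiff_const
  have heq : Function.uncurry (dT F) = fun p : ℝ × ℝ => fderiv ℝ (Function.uncurry F) p ((0 : ℝ), (1 : ℝ)) := by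
    funext p
    exact key p.1 p.2
  rw [heq]; exact h2

/-- complexification as a continuous linear map -/
def ΛL : E3 →L[ℝ] (Fin 3 → ℂ) :=
  ContinuousLinearMap.pi fun i => Complex.ofRealCLM.comp (EuclideanSpace.proj i)

lemma ΛL_apply (v : E3) : ΛL v = cvec v := rfl

lemma hasDerivAt_cvec {f : ℝ → E3} {f' : E3} {x : ℝ} (h : HasDerivAt f f' x) :
    HasDerivAt (fun y => cvec (f y)) (cvec f') x := by
  exact (ΛL.hasFDerivAt.comp_hasDerivAt x h)

lemma hasDerivAt_cip {u v : ℝ → Fin 3 → ℂ} {u' v' : Fin 3 → ℂ} {x : ℝ}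
    (hu : HasDerivAt u u' x) (hv : HasDerivAt v v' x) :
    HasDerivAt (fun y => cip (u y) (v y)) (cip u' (v x) + cip (u x) v') x := by
  have hcomp : ∀ i : Fin 3, HasDerivAt (fun y => u y i * v y i)
      (u' i * v x i + u x i * v' i) x := by
    intro i
    have hui : HasDerivAt (fun y => u y i) (u' i) x := hasDerivAt_pi.1 hu i
    have hvi : HasDerivAt (fun y => v y i) (v' i) x := hasDerivAt_pi.1 hv i
    exact hui.mul hvi
  have hsum := HasDerivAt.fun_sum (u := Finset.univ) (fun i _ => hcomp i)
  have : HasDerivAt (fun y => cip (u y) (v y))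
      (∑ i, (u' i * v x i + u x i * v' i)) x := by
    simpa [cip] using hsum
  convert this using 1
  simp [cip, Finset.sum_add_distrib]

lemma cip_cvec_cvec (u v : E3) : cip (cvec u) (cvec v) = ((⟪u, v⟫ : ℝ) : ℂ) := by
  simp only [cip, cvec, PiLp.inner_apply, RCLike.inner_apply, starRingEnd_apply, star_trivial]
  push_cast
  exact Finset.sum_congr rfl fun i _ => mul_comm _ _

end helpers

section theta

lemma hasDerivAt_primitive {g : ℝ → ℝ} (hg : Continuous g) (s : ℝ) :
    HasDerivAt (fun x => ∫ r in (0:ℝ)..x, g r) (g s) s :=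
  intervalIntegral.integral_hasDerivAt_right (hg.intervalIntegrable _ _)
    ⟨Set.univ, Filter.univ_mem, hg.aestronglyMeasurable.restrict⟩ hg.continuousAt

lemma θ_hasDerivAt_s {τ : ℝ → ℝ → ℝ} (hτ : ContDiff ℝ (⊤ : ℕ∞) (Function.uncurry τ)) (s t : ℝ) :
    HasDerivAt (fun x => θf τ x t) (τ s t) s :=
  hasDerivAt_primitive (contDiff_slice_s hτ t).continuous s

lemma θ_hasDerivAt_t {τ : ℝ → ℝ → ℝ} (hτ : ContDiff ℝ (⊤ : ℕ∞) (Function.uncurry τ)) (s t : ℝ) :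
    HasDerivAt (fun x => θf τ s x) (∫ r in (0:ℝ)..s, dT τ r t) t := by
  have hdτc : Continuous (Function.uncurry (dT τ)) := (contDiff_dT hτ).continuous
  obtain ⟨C, hC⟩ : ∃ C, ∀ p ∈ (Set.uIcc (0:ℝ) s) ×ˢ (Metric.closedBall t 1),
      ‖Function.uncurry (dT τ) p‖ ≤ C :=
    (isCompact_uIcc.prod (isCompact_closedBall t 1)).exists_bound_of_continuousOn
      hdτc.continuousOn
  have key := intervalIntegral.hasDerivAt_integral_of_dominated_loc_of_deriv_le
    (𝕜 := ℝ) (μ := MeasureTheory.volume) (F := fun x r => τ r x) (F' := fun x r => dT τ r x)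
    (a := 0) (b := s) (x₀ := t) (bound := fun _ => C) (Metric.ball_mem_nhds t one_pos)
    (Filter.Eventually.of_forall fun x =>
      ((contDiff_slice_s hτ x).continuous.aestronglyMeasurable).restrict)
    ((contDiff_slice_s hτ t).continuous.intervalIntegrable 0 s)
    ((contDiff_slice_s (contDiff_dT hτ) t).continuous.aestronglyMeasurable).restrict
    (Filter.Eventually.of_forall fun r hr x hx =>
      hC (r, x) ⟨Set.uIoc_subset_uIcc hr, Metric.ball_subset_closedBall hx⟩)
    (intervalIntegrable_const)
    (Filter.Eventually.of_forall fun r _ x _ => hasDerivAt_dT hτ r x)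
  exact key.2

end theta

section alg

lemma cvec_add (u v : E3) : cvec (u + v) = cvec u + cvec v := by
  funext i; simp [cvec]

lemma cvec_smul (a : ℝ) (v : E3) : cvec (a • v) = (a : ℂ) • cvec v := by
  funext i; simp [cvec]

lemma cvec_neg (v : E3) : cvec (-v) = -cvec v := by
  funext i; simp [cvec]

lemma cvec_sub (u v : E3) : cvec (u - v) = cvec u - cvec v := by
  funext i; simp [cvec, Complex.ofReal_sub]

lemma cip_add_left (u v w : Fin 3 → ℂ) : cip (u + v) w = cip u w + cip v w := by
  simp [cip, add_mul, Finset.sum_add_distrib]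

lemma cip_add_right (u v w : Fin 3 → ℂ) : cip u (v + w) = cip u v + cip u w := by
  simp [cip, mul_add, Finset.sum_add_distrib]

lemma cip_smul_left (c : ℂ) (u w : Fin 3 → ℂ) : cip (c • u) w = c * cip u w := by
  simp [cip, Finset.mul_sum, mul_assoc]

lemma cip_smul_right (c : ℂ) (u w : Fin 3 → ℂ) : cip u (c • w) = c * cip u w := by
  simp [cip, Finset.mul_sum]; congr 1; funext i; ring

lemma cip_neg_left (u w : Fin 3 → ℂ) : cip (-u) w = -cip u w := by
  simp [cip, Finset.sum_neg_distrib]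

lemma cip_sub_left (u v w : Fin 3 → ℂ) : cip (u - v) w = cip u w - cip v w := by
  simp [cip, sub_mul, Finset.sum_sub_distrib]

end alg

theorem stmt7
    (γ T N B : ℝ → ℝ → E3) (k τ : ℝ → ℝ → ℝ)
    (hγsm : ContDiff ℝ (⊤ : ℕ∞) (Function.uncurry γ))
    (hTsm : ContDiff ℝ (⊤ : ℕ∞) (Function.uncurry T))
    (hNsm : ContDiff ℝ (⊤ : ℕ∞) (Function.uncurry N))
    (hBsm : ContDiff ℝ (⊤ : ℕ∞) (Function.uncurry B))
    (hksm : ContDiff ℝ (⊤ : ℕ∞) (Function.uncurry k))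
    (hτsm : ContDiff ℝ (⊤ : ℕ∞) (Function.uncurry τ))
    (hkpos : ∀ s t, 0 < k s t)
    (hTdef : ∀ s t, dS γ s t = T s t)
    (horth : ∀ s t, ⟪T s t, T s t⟫ = 1 ∧ ⟪N s t, N s t⟫ = 1 ∧
      ⟪B s t, B s t⟫ = 1 ∧ ⟪T s t, N s t⟫ = 0 ∧
      ⟪T s t, B s t⟫ = 0 ∧ ⟪N s t, B s t⟫ = 0)
    (hFS1 : ∀ s t, dS T s t = k s t • N s t)
    (hFS2 : ∀ s t, dS N s t = -(k s t) • T s t + τ s t • B s t)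
    (hFS3 : ∀ s t, dS B s t = -(τ s t) • N s t)
    (ν μ α : ℝ → ℝ → ℝ)
    (hνsm : ContDiff ℝ (⊤ : ℕ∞) (Function.uncurry ν))
    (hμsm : ContDiff ℝ (⊤ : ℕ∞) (Function.uncurry μ))
    (hαsm : ContDiff ℝ (⊤ : ℕ∞) (Function.uncurry α))
    (hkin : ∀ s t, dT γ s t = ν s t • T s t + μ s t • N s t + α s t • B s t)
    (hmixγ : ∀ s t, dS (dT γ) s t = dT (dS γ) s t)
    (hmixT : ∀ s t, dS (dT T) s t = dT (dS T) s t)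
    (hmixN : ∀ s t, dS (dT N) s t = dT (dS N) s t)
    (hmixB : ∀ s t, dS (dT B) s t = dT (dS B) s t)
    (R : ℝ → ℝ → ℝ)
    (hMt : ∀ s t, dT (Mf N B τ) s t =
      (Complex.I * (R s t : ℂ)) • Mf N B τ s t + ωf T N B τ s t • cvec (T s t))
    :
    ∀ s t, dT (ψf k τ) s t - Complex.I * (R s t : ℂ) * ψf k τ s t +
      dS (ωf T N B τ) s t +
      ((dS ν s t - μ s t * k s t : ℝ) : ℂ) * ψf k τ s t = 0 := by
  -- notation
  set Θ : ℝ → ℝ → ℝ := fun s t => ∫ r in (0:ℝ)..s, dT τ r t with hΘdef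
  set Ecx : ℝ → ℝ → ℂ := fun s t => Complex.exp (Complex.I * (θf τ s t : ℂ)) with hEdef
  -- basic derivative facts
  have hθs : ∀ s t : ℝ, HasDerivAt (fun x => θf τ x t) (τ s t) s := θ_hasDerivAt_s hτsm
  have hθt : ∀ s t : ℝ, HasDerivAt (fun x => θf τ s x) (Θ s t) t := θ_hasDerivAt_t hτsm
  have hΘs : ∀ s t : ℝ, HasDerivAt (fun x => Θ x t) (dT τ s t) s := fun s t =>
    hasDerivAt_primitive (contDiff_slice_s (contDiff_dT hτsm) t).continuous s
  have hExs : ∀ s t : ℝ, HasDerivAt (fun x => Ecx x t)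
      (Complex.I * (τ s t : ℂ) * Ecx s t) s := by
    intro s t
    have h1 : HasDerivAt (fun x => ((θf τ x t : ℝ) : ℂ)) ((τ s t : ℂ)) s := by
      exact (hθs s t).ofReal_comp
    have h2 := (h1.const_mul Complex.I).cexp
    rw [hEdef]
    convert h2 using 1
    ring
  have hExt : ∀ s t : ℝ, HasDerivAt (fun x => Ecx s x)
      (Complex.I * (Θ s t : ℂ) * Ecx s t) t := by
    intro s t
    have h1 : HasDerivAt (fun x => ((θf τ s x : ℝ) : ℂ)) ((Θ s t : ℂ)) t := by
      exact (hθt s t).ofReal_comp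
    have h2 := (h1.const_mul Complex.I).cexp
    rw [hEdef]
    convert h2 using 1
    ring
  -- the s-derivative of M : dS M = -ψ • cvec T
  have hMs : ∀ s t : ℝ, HasDerivAt (fun x => Mf N B τ x t)
      (-(ψf k τ s t) • cvec (T s t)) s := by
    intro s t
    have hP : HasDerivAt (fun x => cvec (N x t) + Complex.I • cvec (B x t))
        (cvec (dS N s t) + Complex.I • cvec (dS B s t)) s :=
      (hasDerivAt_cvec (hasDerivAt_dS hNsm s t)).add
        ((hasDerivAt_cvec (hasDerivAt_dS hBsm s t)).const_smul Complex.I)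
    have h2 := (hExs s t).smul hP
    have : HasDerivAt (fun x => Mf N B τ x t)
        (Ecx s t • (cvec (dS N s t) + Complex.I • cvec (dS B s t)) +
          (Complex.I * (τ s t : ℂ) * Ecx s t) • (cvec (N s t) + Complex.I • cvec (B s t))) s := h2
    convert this using 1
    rw [hFS2 s t, hFS3 s t]
    funext i
    simp only [cvec_add, cvec_smul, cvec_neg, Pi.add_apply, Pi.smul_apply, Pi.neg_apply,
      smul_eq_mul, ψf, cvec, Complex.ofReal_neg]
    push_cast
    linear_combination (-(τ s t : ℂ) * Ecx s t * ((B s t i : ℝ) : ℂ)) * Complex.I_sq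
  -- the t-derivative of M, explicitly
  have hMt' : ∀ s t : ℝ, dT (Mf N B τ) s t =
      (Complex.I * (Θ s t : ℂ)) • Mf N B τ s t +
        Ecx s t • (cvec (dT N s t) + Complex.I • cvec (dT B s t)) := by
    intro s t
    have hP : HasDerivAt (fun x => cvec (N s x) + Complex.I • cvec (B s x))
        (cvec (dT N s t) + Complex.I • cvec (dT B s t)) t :=
      (hasDerivAt_cvec (hasDerivAt_dT hNsm s t)).add
        ((hasDerivAt_cvec (hasDerivAt_dT hBsm s t)).const_smul Complex.I)
    have h2 := (hExt s t).smul hP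
    have h3 : HasDerivAt (fun x => Mf N B τ s x)
        (Ecx s t • (cvec (dT N s t) + Complex.I • cvec (dT B s t)) +
          (Complex.I * (Θ s t : ℂ) * Ecx s t) • (cvec (N s t) + Complex.I • cvec (B s t))) t := h2
    have h4 := h3.deriv
    show deriv (fun x => Mf N B τ s x) t = _
    rw [h4]
    have hMeq : Mf N B τ s t = Ecx s t • (cvec (N s t) + Complex.I • cvec (B s t)) := rfl
    rw [hMeq, smul_smul]
    abel
  -- t-derivatives of Frenet relations via mixed partials
  have hNst : ∀ s t : ℝ, dS (dT N) s t =
      (-(dT k s t)) • T s t + (-(k s t)) • dT T s t + (dT τ s t) • B s t + τ s t • dT B s t := by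
    intro s t
    rw [hmixN s t]
    have hfun : (fun x => dS N s x) = fun x => -(k s x) • T s x + τ s x • B s x :=
      funext fun x => hFS2 s x
    show deriv (fun x => dS N s x) t = _
    rw [hfun]
    have h1 := (((hasDerivAt_dT hksm s t).neg).smul (hasDerivAt_dT hTsm s t)).add
      ((hasDerivAt_dT hτsm s t).smul (hasDerivAt_dT hBsm s t))
    have h1' : HasDerivAt (fun x => -k s x • T s x + τ s x • B s x)
        (-k s t • dT T s t + -dT k s t • T s t + (τ s t • dT B s t + dT τ s t • B s t)) t := h1
    rw [h1'.deriv]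
    module
  have hBst : ∀ s t : ℝ, dS (dT B) s t =
      (-(dT τ s t)) • N s t + (-(τ s t)) • dT N s t := by
    intro s t
    rw [hmixB s t]
    have hfun : (fun x => dS B s x) = fun x => -(τ s x) • N s x :=
      funext fun x => hFS3 s x
    show deriv (fun x => dS B s x) t = _
    rw [hfun]
    have h1 := ((hasDerivAt_dT hτsm s t).neg).smul (hasDerivAt_dT hNsm s t)
    have h1' : HasDerivAt (fun x => -τ s x • N s x)
        (-τ s t • dT N s t + -dT τ s t • N s t) t := h1
    rw [h1'.deriv]
    module
  -- unit tangent: ⟪∂ₜT, T⟫ = 0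
  have hTt0 : ∀ s t : ℝ, ⟪dT T s t, T s t⟫ = 0 := by
    intro s t
    have h1 := (hasDerivAt_dT hTsm s t).inner ℝ (hasDerivAt_dT hTsm s t)
    have h2 : (fun x => (⟪T s x, T s x⟫ : ℝ)) = fun _ => 1 := funext fun x => (horth s x).1
    rw [h2] at h1
    have h3 := h1.unique (hasDerivAt_const t 1)
    have h4 : ⟪T s t, dT T s t⟫ = ⟪dT T s t, T s t⟫ := real_inner_comm _ _
    rw [h4] at h3
    linarith
  -- Part 1 : dS ν = μ k
  have hνs : ∀ s t : ℝ, dS ν s t = μ s t * k s t := by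
    intro s t
    have hds : dS γ = T := funext fun a => funext fun b => hTdef a b
    have hTt : dT T s t = dS (dT γ) s t := by rw [hmixγ s t, hds]
    have hfun : (fun x => dT γ x t) = fun x => ν x t • T x t + μ x t • N x t + α x t • B x t :=
      funext fun x => hkin x t
    have h1 := (((hasDerivAt_dS hνsm s t).smul (hasDerivAt_dS hTsm s t)).add
      ((hasDerivAt_dS hμsm s t).smul (hasDerivAt_dS hNsm s t))).add
      ((hasDerivAt_dS hαsm s t).smul (hasDerivAt_dS hBsm s t))
    have hexp : dS (dT γ) s t =
        (ν s t • dS T s t + dS ν s t • T s t + (μ s t • dS N s t + dS μ s t • N s t)) +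
          (α s t • dS B s t + dS α s t • B s t) := by
      show deriv (fun x => dT γ x t) s = _
      rw [hfun]
      exact h1.deriv
    have h0 := hTt0 s t
    rw [hTt, hexp, hFS1 s t, hFS2 s t, hFS3 s t] at h0
    obtain ⟨o1, o2, o3, o4, o5, o6⟩ := horth s t
    have c4 : ⟪N s t, T s t⟫ = 0 := by rw [real_inner_comm]; exact o4
    have c5 : ⟪B s t, T s t⟫ = 0 := by rw [real_inner_comm]; exact o5
    simp only [inner_add_left, real_inner_smul_left, smul_smul, inner_neg_left,
      inner_smul_left, RCLike.conj_to_real, o1, c4, c5, mul_zero, mul_one, add_zero,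
      zero_add, mul_neg, neg_mul] at h0
    nlinarith [h0]
  -- now fix the point
  intro s t
  obtain ⟨o1, o2, o3, o4, o5, o6⟩ := horth s t
  have c4 : ⟪N s t, T s t⟫ = 0 := by rw [real_inner_comm]; exact o4
  have c5 : ⟪B s t, T s t⟫ = 0 := by rw [real_inner_comm]; exact o5
  have c6 : ⟪B s t, N s t⟫ = 0 := by rw [real_inner_comm]; exact o6
  -- t-derivative of ψ
  have hψtd : HasDerivAt (fun x => ψf k τ s x)
      ((((dT k s t : ℝ) : ℂ) + Complex.I * (k s t : ℂ) * (Θ s t : ℂ)) * Ecx s t) t := by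
    have hk1 : HasDerivAt (fun x => ((k s x : ℝ) : ℂ)) (((dT k s t : ℝ) : ℂ)) t := by
      exact (hasDerivAt_dT hksm s t).ofReal_comp
    have h2 := hk1.mul (hExt s t)
    have h3 : HasDerivAt (fun x => ψf k τ s x)
        (((dT k s t : ℝ) : ℂ) * Ecx s t + (k s t : ℂ) * (Complex.I * (Θ s t : ℂ) * Ecx s t)) t := h2
    convert h3 using 1
    ring
  -- s-derivative of (∂ₜ M)
  have hG : HasDerivAt (fun x => dT (Mf N B τ) x t)
      ((Complex.I * (Θ s t : ℂ)) • (-(ψf k τ s t) • cvec (T s t))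
        + (Complex.I * ((dT τ s t : ℝ) : ℂ)) • Mf N B τ s t
        + (Ecx s t • (cvec (dS (dT N) s t) + Complex.I • cvec (dS (dT B) s t))
          + (Complex.I * (τ s t : ℂ) * Ecx s t) •
              (cvec (dT N s t) + Complex.I • cvec (dT B s t)))) s := by
    have hfun : (fun x => dT (Mf N B τ) x t) = fun x =>
        (Complex.I * (Θ x t : ℂ)) • Mf N B τ x t +
          Ecx x t • (cvec (dT N x t) + Complex.I • cvec (dT B x t)) :=
      funext fun x => hMt' x t
    rw [hfun]
    have hc1 : HasDerivAt (fun x => Complex.I * (Θ x t : ℂ)) (Complex.I * ((dT τ s t : ℝ) : ℂ)) s := by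
      have h0 : HasDerivAt (fun x => ((Θ x t : ℝ) : ℂ)) (((dT τ s t : ℝ) : ℂ)) s := by
        exact (hΘs s t).ofReal_comp
      simpa [mul_comm] using h0.const_mul Complex.I
    have hW : HasDerivAt (fun x => cvec (dT N x t) + Complex.I • cvec (dT B x t))
        (cvec (dS (dT N) s t) + Complex.I • cvec (dS (dT B) s t)) s :=
      (hasDerivAt_cvec (hasDerivAt_dS (contDiff_dT hNsm) s t)).add
        ((hasDerivAt_cvec (hasDerivAt_dS (contDiff_dT hBsm) s t)).const_smul Complex.I)
    exact (hc1.smul (hMs s t)).add ((hExs s t).smul hW)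
  -- s-derivative of ω
  have hωs : dS (ωf T N B τ) s t =
      -((((dT k s t : ℝ) : ℂ) + Complex.I * (k s t : ℂ) * (Θ s t : ℂ)) * Ecx s t) +
        Complex.I * (R s t : ℂ) * ψf k τ s t := by
    have hωd := hasDerivAt_cip hG (hasDerivAt_cvec (hasDerivAt_dS hTsm s t))
    have hd : dS (ωf T N B τ) s t = _ := hωd.deriv
    rw [hd, hNst s t, hBst s t, hFS1 s t, hMt s t]
    have hMexp : Mf N B τ s t = Ecx s t • (cvec (N s t) + Complex.I • cvec (B s t)) := rfl
    have hψexp : ψf k τ s t = (k s t : ℂ) * Ecx s t := rfl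
    rw [hMexp, hψexp]
    simp only [cvec_add, cvec_smul, cvec_neg, smul_add, smul_smul, neg_smul,
      cip_add_left, cip_add_right, cip_smul_left, cip_smul_right, cip_neg_left,
      neg_neg, Complex.ofReal_neg, cip_cvec_cvec,
      o1, o2, o3, o4, o5, o6, c4, c5, c6, hTt0 s t,
      Complex.ofReal_zero, Complex.ofReal_one, mul_zero, zero_mul, mul_one, one_mul,
      add_zero, zero_add, neg_zero, mul_neg, neg_mul]
    push_cast
    linear_combination ((τ s t : ℂ) * Ecx s t * ((⟪dT B s t, T s t⟫ : ℝ) : ℂ)) * Complex.I_sq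
  -- assemble
  have hdtψ : dT (ψf k τ) s t =
      (((dT k s t : ℝ) : ℂ) + Complex.I * (k s t : ℂ) * (Θ s t : ℂ)) * Ecx s t := hψtd.deriv
  rw [hdtψ, hωs, hνs s t, sub_self, Complex.ofReal_zero, zero_mul, add_zero]
  ring
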